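/- The number of decision variables in the link-based flow LP formulation equals 2·|D|·|E|·Σ_{a∈A}|E^a| and is independent of both the number of user requests |U| and the number of substrate paths Σ_{s,t}|P_{st}|; in contrast, the path-based MILP has at least |U|·Σ_{a∈A, used} |E^a| · min_{s,t}|P_{st}| per-user steering variables, so when |P_{st}| grows exponentially in |D| the link-based LP has exponentially fewer variables. -/

import Mathlib

section VariableCounts

open Fintype

theorem card_bool_prod_prod_prod_sigma {D E A : Type*} [Fintype D] [Fintype E] [Fintype A]
    (Ea : A → Type*) [∀ a, Fintype (Ea a)] :
    card (Bool × D × E × (Σ a : A, Ea a)) = 2 * card D * card E * ∑ a : A, card (Ea a) := by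
  simp only [card_prod, card_sigma, card_bool, mul_assoc]

theorem mul_mul_le_card_prod_prod {α β γ : Type*} [Fintype α] [Fintype β] [Fintype γ]
    {m : ℕ} (hm : m ≤ card γ) : card α * card β * m ≤ card (α × β × γ) := by
  rw [card_prod, card_prod, ← mul_assoc]
  gcongr

end VariableCounts

/-- The link-based flow LP has one direct-flow and one transient-flow
variable per (source DC `s ∈ D`, substrate link `e ∈ E`, application logical link
`e^a_{ij}`), i.e. exactly `2·|D|·|E|·Σ_a |Ea a|` variables — a count independent of the
number of users `|U|` and of the number of substrate paths. The path-based MILP has a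
per-user steering variable for each user, logical link, and candidate path; if every
pair has at least `pmin` candidate paths then it has at least `|U|·(Σ_a |Ea a|)·pmin`
variables, and whenever `pmin ≥ 2·|D|·|E|` (e.g. `pmin = (n−2)!` in a complete graph)
the link-based LP has no more variables than the path-based MILP. -/
theorem stmt_8 {D E A U P : Type*} [Fintype D] [Fintype E] [Fintype A] [Fintype U]
    [Fintype P]
    (Ea : A → Type*) [∀ a, Fintype (Ea a)]
    (pmin : ℕ) (hP : pmin ≤ Fintype.card P) (hU : 1 ≤ Fintype.card U) :
    Fintype.card (Bool × D × E × (Σ a : A, Ea a)) =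
        2 * Fintype.card D * Fintype.card E * ∑ a : A, Fintype.card (Ea a) ∧
      Fintype.card U * (∑ a : A, Fintype.card (Ea a)) * pmin ≤
        Fintype.card (U × (Σ a : A, Ea a) × P) ∧
      (2 * Fintype.card D * Fintype.card E ≤ pmin →
        Fintype.card (Bool × D × E × (Σ a : A, Ea a)) ≤
          Fintype.card (U × (Σ a : A, Ea a) × P)) := by
  have hlink := card_bool_prod_prod_prod_sigma (D := D) (E := E) Ea
  have hpath : Fintype.card U * Fintype.card (Σ a : A, Ea a) * pmin ≤
      Fintype.card (U × (Σ a : A, Ea a) × P) := mul_mul_le_card_prod_prod hP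
  rw [Fintype.card_sigma] at hpath
  refine ⟨hlink, hpath, fun hpmin => ?_⟩
  calc Fintype.card (Bool × D × E × (Σ a : A, Ea a))
      = 2 * Fintype.card D * Fintype.card E * ∑ a : A, Fintype.card (Ea a) := hlink
    _ ≤ pmin * ∑ a : A, Fintype.card (Ea a) := by gcongr
    _ ≤ Fintype.card U * (∑ a : A, Fintype.card (Ea a)) * pmin := by
      rw [mul_comm pmin, mul_assoc]
      exact Nat.le_mul_of_pos_left _ hU
    _ ≤ _ := hpath
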